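/- Let f : [0,∞) → [0,∞) be continuous, let a : [0,1] → [0,∞) be continuous with α = ∫₀¹ a(t) dt satisfying 0 < α < 1, and define (Au)(t) = ∫₀¹ ( G(t,s) + (1/(1-α)) ∫₀¹ a(τ) G(τ,s) dτ ) f(u(s)) ds. Suppose f is bounded, say f(v) ≤ L for all v ≥ 0 with L > 0, and let ρ₂ ≥ L/(6(1−α)). Then for every continuous nonnegative u : [0,1] → ℝ with ‖u‖ = ρ₂ (sup norm), one has ‖Au‖ ≤ ‖u‖. -/

import Mathlib

/-- The Green's function of the fourth-order problem. -/
noncomputable def G (t s : ℝ) : ℝ :=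
  if s ≤ t then (t ^ 3 * (1 - s) ^ 2 - (t - s) ^ 3) / 6
  else t ^ 3 * (1 - s) ^ 2 / 6

/-- The sup norm on `[0,1]` of a function `u : ℝ → ℝ`. -/
noncomputable def supNorm (u : ℝ → ℝ) : ℝ := ⨆ t : Set.Icc (0 : ℝ) 1, |u t|

/-!
Both parts of the kernel `G t s + (1 - α)⁻¹ ∫ a(τ) G(τ,s) dτ` are controlled by `0 ≤ G ≤ 1/6` on
the unit square, so the kernel lies between `0` and `1/6 + α/(6(1-α)) = 1/(6(1-α))`. Since
`0 ≤ f ≤ L` on `[0,∞)` and `u ≥ 0`, this gives `0 ≤ Au ≤ L/(6(1-α)) ≤ ρ₂ = ‖u‖` on `[0,1]`.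
-/

open Set MeasureTheory

/-- Unlike `intervalIntegral.integral_mono_on`, only the larger function has to be integrable. -/
lemma intervalIntegral_mono_on_of_nonneg {f g : ℝ → ℝ} {a b : ℝ} (hab : a ≤ b)
    (hg : IntervalIntegrable g volume a b) (hf : ∀ x ∈ Icc a b, 0 ≤ f x)
    (hfg : ∀ x ∈ Icc a b, f x ≤ g x) :
    ∫ x in a..b, f x ≤ ∫ x in a..b, g x := by
  rw [intervalIntegral.integral_of_le hab, intervalIntegral.integral_of_le hab]
  refine integral_mono_of_nonneg ?_ (hg.1) ?_ <;>
    refine ae_restrict_of_forall_mem measurableSet_Ioc fun x hx ↦ ?_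
  exacts [hf x (Ioc_subset_Icc_self hx), hfg x (Ioc_subset_Icc_self hx)]

lemma abs_intervalIntegral_mul_le {k g : ℝ → ℝ} {a b K L : ℝ} (hab : a ≤ b)
    (hk : ∀ s ∈ Icc a b, k s ∈ Icc 0 K) (hg : ∀ s ∈ Icc a b, g s ∈ Icc 0 L) :
    |∫ s in a..b, k s * g s| ≤ (b - a) * (K * L) := by
  have hkg : ∀ s ∈ Icc a b, 0 ≤ k s * g s := fun s hs ↦ mul_nonneg (hk s hs).1 (hg s hs).1
  rw [abs_of_nonneg (intervalIntegral.integral_nonneg hab hkg), ← smul_eq_mul,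
    ← intervalIntegral.integral_const]
  exact intervalIntegral_mono_on_of_nonneg hab intervalIntegrable_const hkg fun s hs ↦
    mul_le_mul (hk s hs).2 (hg s hs).2 (hg s hs).1 ((hk s hs).1.trans (hk s hs).2)

lemma supNorm_le {u : ℝ → ℝ} {C : ℝ} (hC : 0 ≤ C) (hu : ∀ t ∈ Icc (0 : ℝ) 1, |u t| ≤ C) :
    supNorm u ≤ C :=
  Real.iSup_le (fun t ↦ hu t t.2) hC

lemma G_nonneg {t s : ℝ} (ht : t ∈ Icc (0 : ℝ) 1) (hs : s ∈ Icc (0 : ℝ) 1) : 0 ≤ G t s := by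
  obtain ⟨ht0, ht1⟩ := ht
  obtain ⟨hs0, hs1⟩ := hs
  unfold G
  split_ifs with hst
  · -- `t - s ≤ t (1 - s)` and `(1 - s)³ ≤ (1 - s)²`
    have h₁ : (t - s) ^ 3 ≤ (t * (1 - s)) ^ 3 :=
      pow_le_pow_left₀ (by linarith) (by nlinarith) 3
    have h₂ : (t * (1 - s)) ^ 3 ≤ t ^ 3 * (1 - s) ^ 2 := by
      rw [mul_pow]
      exact mul_le_mul_of_nonneg_left (pow_le_pow_of_le_one (by linarith) (by linarith)
        (by norm_num)) (by positivity)
    linarith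
  · positivity

lemma G_le_one_sixth {t s : ℝ} (ht : t ∈ Icc (0 : ℝ) 1) (hs : s ∈ Icc (0 : ℝ) 1) :
    G t s ≤ 1 / 6 := by
  obtain ⟨ht0, ht1⟩ := ht
  obtain ⟨hs0, hs1⟩ := hs
  have h : t ^ 3 * (1 - s) ^ 2 ≤ 1 :=
    mul_le_one₀ (pow_le_one₀ ht0 ht1) (by positivity) (pow_le_one₀ (by linarith) (by linarith))
  unfold G
  split_ifs with hst
  · nlinarith [pow_nonneg (sub_nonneg.2 hst) 3]
  · linarith

lemma integral_mul_G_mem_Icc {a : ℝ → ℝ} (ha : IntervalIntegrable a volume 0 1)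
    (ha0 : ∀ t ∈ Icc (0 : ℝ) 1, 0 ≤ a t) {s : ℝ} (hs : s ∈ Icc (0 : ℝ) 1) :
    ∫ τ in (0 : ℝ)..1, a τ * G τ s ∈ Icc 0 ((∫ τ in (0 : ℝ)..1, a τ) / 6) := by
  have h0 : ∀ τ ∈ Icc (0 : ℝ) 1, 0 ≤ a τ * G τ s :=
    fun τ hτ ↦ mul_nonneg (ha0 τ hτ) (G_nonneg hτ hs)
  refine ⟨intervalIntegral.integral_nonneg zero_le_one h0, ?_⟩
  rw [← intervalIntegral.integral_div]
  refine intervalIntegral_mono_on_of_nonneg zero_le_one (ha.div_const 6) h0 fun τ hτ ↦ ?_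
  rw [div_eq_mul_one_div]
  exact mul_le_mul_of_nonneg_left (G_le_one_sixth hτ hs) (ha0 τ hτ)

/-- `(Au)(t) = ∫₀¹ operatorKernel a t s * f (u s) ds`. -/
noncomputable def operatorKernel (a : ℝ → ℝ) (t s : ℝ) : ℝ :=
  G t s + (1 / (1 - ∫ τ in (0 : ℝ)..1, a τ)) * ∫ τ in (0 : ℝ)..1, a τ * G τ s

lemma operatorKernel_mem_Icc {a : ℝ → ℝ} (ha : IntervalIntegrable a volume 0 1)
    (ha0 : ∀ t ∈ Icc (0 : ℝ) 1, 0 ≤ a t) (hα : (∫ t in (0 : ℝ)..1, a t) < 1)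
    {t s : ℝ} (ht : t ∈ Icc (0 : ℝ) 1) (hs : s ∈ Icc (0 : ℝ) 1) :
    operatorKernel a t s ∈ Icc 0 (1 / (6 * (1 - ∫ t in (0 : ℝ)..1, a t))) := by
  have hα' : 0 < 1 - ∫ t in (0 : ℝ)..1, a t := sub_pos.2 hα
  have hG := G_le_one_sixth ht hs
  have hI := integral_mul_G_mem_Icc ha ha0 hs
  constructor
  · exact add_nonneg (G_nonneg ht hs) (mul_nonneg (by positivity) hI.1)
  · calc operatorKernel a t s
        ≤ 1 / 6 + 1 / (1 - ∫ t in (0 : ℝ)..1, a t) * ((∫ t in (0 : ℝ)..1, a t) / 6) := by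
          unfold operatorKernel; gcongr; exact hI.2
      _ = 1 / (6 * (1 - ∫ t in (0 : ℝ)..1, a t)) := by field_simp; ring

theorem stmt_16_general (f a : ℝ → ℝ)
    (hf0 : ∀ v ∈ Set.Ici (0 : ℝ), 0 ≤ f v)
    (ha : ContinuousOn a (Set.Icc 0 1))
    (ha0 : ∀ t ∈ Set.Icc (0 : ℝ) 1, 0 ≤ a t)
    (hα1 : (∫ t in (0 : ℝ)..1, a t) < 1)
    (L ρ₂ : ℝ)
    (hfL : ∀ v : ℝ, 0 ≤ v → f v ≤ L)
    (hρ₂ : L / (6 * (1 - ∫ t in (0 : ℝ)..1, a t)) ≤ ρ₂)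
    (u Au : ℝ → ℝ)
    (hu0 : ∀ t ∈ Set.Icc (0 : ℝ) 1, 0 ≤ u t)
    (hunorm : supNorm u = ρ₂)
    (hAu : ∀ t, Au t = ∫ s in (0 : ℝ)..1,
      (G t s + (1 / (1 - ∫ τ in (0 : ℝ)..1, a τ)) *
        ∫ τ in (0 : ℝ)..1, a τ * G τ s) * f (u s)) :
    supNorm Au ≤ supNorm u := by
  have ha' : IntervalIntegrable a volume 0 1 := ha.intervalIntegrable_of_Icc zero_le_one
  have hAu_le (t : ℝ) (ht : t ∈ Icc (0 : ℝ) 1) :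
      |Au t| ≤ L / (6 * (1 - ∫ t in (0 : ℝ)..1, a t)) := by
    calc |Au t| = |∫ s in (0 : ℝ)..1, operatorKernel a t s * f (u s)| := by rw [hAu]; rfl
      _ ≤ (1 - 0) * (1 / (6 * (1 - ∫ t in (0 : ℝ)..1, a t)) * L) :=
        abs_intervalIntegral_mul_le zero_le_one
          (fun s hs ↦ operatorKernel_mem_Icc ha' ha0 hα1 ht hs)
          (fun s hs ↦ ⟨hf0 _ (hu0 s hs), hfL _ (hu0 s hs)⟩)
      _ = L / (6 * (1 - ∫ t in (0 : ℝ)..1, a t)) := by ring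
  rw [hunorm]
  exact (supNorm_le ((abs_nonneg _).trans (hAu_le 0 ⟨le_rfl, zero_le_one⟩)) hAu_le).trans hρ₂

theorem stmt_16 (f a : ℝ → ℝ)
    (hf : ContinuousOn f (Set.Ici 0))
    (hf0 : ∀ v ∈ Set.Ici (0 : ℝ), 0 ≤ f v)
    (ha : ContinuousOn a (Set.Icc 0 1))
    (ha0 : ∀ t ∈ Set.Icc (0 : ℝ) 1, 0 ≤ a t)
    (hα0 : 0 < ∫ t in (0 : ℝ)..1, a t)
    (hα1 : (∫ t in (0 : ℝ)..1, a t) < 1)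
    (L ρ₂ : ℝ) (hL : 0 < L)
    (hfL : ∀ v : ℝ, 0 ≤ v → f v ≤ L)
    (hρ₂ : L / (6 * (1 - ∫ t in (0 : ℝ)..1, a t)) ≤ ρ₂)
    (u Au : ℝ → ℝ)
    (hu : ContinuousOn u (Set.Icc 0 1))
    (hu0 : ∀ t ∈ Set.Icc (0 : ℝ) 1, 0 ≤ u t)
    (hunorm : supNorm u = ρ₂)
    (hAu : ∀ t, Au t = ∫ s in (0 : ℝ)..1,
      (G t s + (1 / (1 - ∫ τ in (0 : ℝ)..1, a τ)) *
        ∫ τ in (0 : ℝ)..1, a τ * G τ s) * f (u s)) :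
    supNorm Au ≤ supNorm u :=
  stmt_16_general f a hf0 ha ha0 hα1 L ρ₂ hfL hρ₂ u Au hu0 hunorm hAu
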